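/- Let D be an integral domain with quotient field K and let ⋆ be a semistar operation of D. Then ▲^⋆ := ▲^⋆_K is a strict extension of ⋆ to D[X], and it is the largest strict extension: every semistar operation ★ of D[X] that is a strict extension of ⋆ satisfies ★ ≤ ▲^⋆ (i.e., A^★ ⊆ A^{▲^⋆} for all A ∈ F̄(D[X])). -/

import Mathlib

/- Preliminaries: semistar operations on an integral domain `R` with quotient field `F`
(submodules of `F` over `R`), polynomial extension of semistar operations from `D`
to `D[X]` (viewed inside the quotient field `K(X) = RatFunc K` of `D[X]`). -/

open Polynomial Pointwise

set_option synthInstance.maxHeartbeats 1000000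
set_option maxHeartbeats 1000000

open scoped Classical

noncomputable section

section Generic

variable (R F : Type*) [CommRing R] [Field F] [Algebra R F]

/-- `o` is a semistar operation of `R` (on the nonzero `R`-submodules of the
quotient field `F`). -/
def IsSemistarOp (o : Submodule R F → Submodule R F) : Prop :=
  (∀ x : F, x ≠ 0 → ∀ E : Submodule R F, E ≠ ⊥ → o (x • E) = x • o E) ∧
  (∀ E G : Submodule R F, E ≠ ⊥ → G ≠ ⊥ → E ≤ G → o E ≤ o G) ∧
  (∀ E : Submodule R F, E ≠ ⊥ → E ≤ o E) ∧
  (∀ E : Submodule R F, E ≠ ⊥ → o (o E) = o E)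

/-- The finite-type operation `⋆_f` associated to `⋆`:
`E^{⋆_f} = ⋃ { G^⋆ : G nonzero finitely generated, G ⊆ E }`. -/
def finTypeFun (o : Submodule R F → Submodule R F) : Submodule R F → Submodule R F :=
  fun E => ⨆ (G : Submodule R F) (_ : G ≠ ⊥) (_ : G.FG) (_ : G ≤ E), o G

/-- `⋆` is of finite type, i.e. `⋆ = ⋆_f`. -/
def IsFiniteTypeFun (o : Submodule R F → Submodule R F) : Prop :=
  ∀ E : Submodule R F, E ≠ ⊥ → o E = finTypeFun R F o E

/-- `⋆` is stable: `(E ∩ G)^⋆ = E^⋆ ∩ G^⋆`. -/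
def IsStableFun (o : Submodule R F → Submodule R F) : Prop :=
  ∀ E G : Submodule R F, E ≠ ⊥ → G ≠ ⊥ → o (E ⊓ G) = o E ⊓ o G

/-- An ideal of `R` viewed as an `R`-submodule of `F`. -/
def idealSub (J : Ideal R) : Submodule R F := Submodule.map (Algebra.linearMap R F) J

/-- `(E : J) = { x ∈ F : xJ ⊆ E }` for an ideal `J` of `R`. -/
def colonIdeal (E : Submodule R F) (J : Ideal R) : Submodule R F where
  carrier := { x : F | ∀ a ∈ J, a • x ∈ E }
  add_mem' := fun {x y} hx hy a ha => by
    simpa [smul_add] using E.add_mem (hx a ha) (hy a ha)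
  zero_mem' := fun a _ => by simpa using E.zero_mem
  smul_mem' := fun r x hx a ha => by
    rw [← mul_smul, mul_comm, mul_smul]
    exact E.smul_mem r (hx a ha)

/-- The stable finite-type operation `tilde ⋆` associated to `⋆`:
`E^{tilde ⋆} = ⋃ { (E : J) : J nonzero finitely generated integral ideal with J^⋆ = R^⋆ }`. -/
def tildeFun (o : Submodule R F → Submodule R F) : Submodule R F → Submodule R F :=
  fun E => ⨆ (J : Ideal R) (_ : J ≠ ⊥) (_ : J.FG)
    (_ : o (idealSub R F J) = o (1 : Submodule R F)), colonIdeal R F E J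

/-- The `v`-operation: `E^v = (R : (R : E))` for `E` a nonzero fractional ideal,
and `E^v = F` otherwise. -/
def vFun : Submodule R F → Submodule R F := fun E =>
  if ∃ d : R, d ≠ 0 ∧ ∀ x ∈ E, d • x ∈ (1 : Submodule R F) then
    (1 : Submodule R F) / ((1 : Submodule R F) / E)
  else ⊤

/-- The `eab` operation `⋆_a` associated to `⋆`. -/
def aFun (o : Submodule R F → Submodule R F) : Submodule R F → Submodule R F := fun E =>
  ⨆ (G : Submodule R F) (_ : G ≠ ⊥) (_ : G.FG) (_ : G ≤ E),
    ⨆ (H : Submodule R F) (_ : H ≠ ⊥) (_ : H.FG), o (G * H) / o H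

/-- `I` is a quasi-`⋆`-ideal: a nonzero integral ideal with `I^⋆ ∩ R = I`. -/
def isQuasiIdealFun (o : Submodule R F → Submodule R F) (I : Ideal R) : Prop :=
  I ≠ ⊥ ∧ (o (idealSub R F I)).comap (Algebra.linearMap R F) = I

/-- `I` is a quasi-`⋆`-maximal ideal: maximal among proper quasi-`⋆`-ideals. -/
def isQuasiMaximalFun (o : Submodule R F → Submodule R F) (I : Ideal R) : Prop :=
  isQuasiIdealFun R F o I ∧ I ≠ ⊤ ∧
    ∀ J : Ideal R, isQuasiIdealFun R F o J → J ≠ ⊤ → I ≤ J → I = J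

/-- The `v`-operation relative to an overring `R'` (an `R`-submodule of `F`):
`B ↦ (R' : (R' : B))` for `B` a nonzero fractional ideal of `R'`, `F` otherwise. -/
def vRelFun (R' B : Submodule R F) : Submodule R F :=
  if ∃ z ∈ R', z ≠ 0 ∧ ∀ x ∈ B, z * x ∈ R' then R' / (R' / B) else ⊤

/-- The `t`-operation relative to an overring `R'`: finite-type operation associated to
the `v`-operation of `R'` (the union being over nonzero finitely generated
`R'`-submodules contained in `B`). -/
def tRelFun (R' B : Submodule R F) : Submodule R F :=
  ⨆ (G : Submodule R F) (_ : G ≠ ⊥)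
    (_ : ∃ S : Finset F, G = R' * Submodule.span R (S : Set F)) (_ : G ≤ B),
    vRelFun R F R' G

end Generic

section Poly

variable (D K : Type*) [CommRing D] [IsDomain D] [Field K] [Algebra D K] [IsFractionRing D K]

/-- The canonical ring homomorphism `D[X] → K(X)`. -/
def polyToRF : Polynomial D →+* RatFunc K :=
  (algebraMap (Polynomial K) (RatFunc K)).comp (Polynomial.mapRingHom (algebraMap D K))

/-- `K(X)` is an algebra over `D[X]`; in fact it is the quotient field of `D[X]`. -/
instance (priority := 100) : Algebra (Polynomial D) (RatFunc K) := (polyToRF D K).toAlgebra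

/-- For a `D`-submodule `E` of `K`, the `D[X]`-submodule `E[X]` of `K(X)`:
polynomials all of whose coefficients lie in `E`. -/
def polyExt (E : Submodule D K) : Submodule (Polynomial D) (RatFunc K) where
  carrier := { f : RatFunc K | ∃ p : Polynomial K, (∀ n, p.coeff n ∈ E) ∧
      f = algebraMap (Polynomial K) (RatFunc K) p }
  add_mem' := by
    rintro f g ⟨p, hp, rfl⟩ ⟨q, hq, rfl⟩
    exact ⟨p + q, fun n => by simpa using E.add_mem (hp n) (hq n), by simp⟩
  zero_mem' := ⟨0, fun n => by simpa using E.zero_mem, by simp⟩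
  smul_mem' := by
    rintro c f ⟨p, hp, rfl⟩
    refine ⟨Polynomial.map (algebraMap D K) c * p, fun n => ?_, ?_⟩
    · rw [Polynomial.coeff_mul]
      refine Submodule.sum_mem E fun ij _ => ?_
      rw [Polynomial.coeff_map, ← Algebra.smul_def]
      exact E.smul_mem _ (hp ij.2)
    · rw [Algebra.smul_def, RingHom.algebraMap_toAlgebra, map_mul]
      unfold polyToRF
      simp

/-- The contraction `B ∩ K` of a `D[X]`-submodule `B` of `K(X)` to a `D`-submodule of `K`. -/
def contractToBase (B : Submodule (Polynomial D) (RatFunc K)) : Submodule D K where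
  carrier := { x : K | algebraMap K (RatFunc K) x ∈ B }
  add_mem' := fun {x y} hx hy => by
    simpa [Set.mem_setOf_eq, map_add] using B.add_mem hx hy
  zero_mem' := by simpa using B.zero_mem
  smul_mem' := fun d x hx => by
    have h : algebraMap K (RatFunc K) (d • x)
        = (Polynomial.C d : Polynomial D) • (algebraMap K (RatFunc K) x) := by
      rw [Algebra.smul_def d x, map_mul, Algebra.smul_def, RingHom.algebraMap_toAlgebra]
      unfold polyToRF
      simp only [RingHom.coe_comp, Function.comp_apply, Polynomial.coe_mapRingHom,
        Polynomial.map_C, RatFunc.algebraMap_C, RatFunc.algebraMap_eq_C]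
    show algebraMap K (RatFunc K) (d • x) ∈ B
    rw [h]
    exact B.smul_mem (Polynomial.C d) hx

/-- The content `c_D(S)`: the `D`-submodule of `K` generated by the coefficients of all
polynomials belonging to `S`. -/
def contentOf (S : Set (RatFunc K)) : Submodule D K :=
  Submodule.span D { x : K | ∃ p : Polynomial K,
    algebraMap (Polynomial K) (RatFunc K) p ∈ S ∧ ∃ n, p.coeff n = x }

/-- The semistar operation `▲^⋆_T` of `D[X]` associated to a semistar operation `⋆` of `D`
and an overring `T` of `D`:
`A ↦ ⋂ { z⁻¹ (c_D(zA))^⋆[X] : z ∈ (T[X] : A), z ≠ 0 }` if `(T[X] : A) ≠ 0`, else `A ↦ K(X)`. -/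
def bigTriT (o : Submodule D K → Submodule D K) (T : Subalgebra D K) :
    Submodule (Polynomial D) (RatFunc K) → Submodule (Polynomial D) (RatFunc K) := fun A =>
  if ∃ z : RatFunc K, z ≠ 0 ∧ ∀ a ∈ A, z * a ∈ polyExt D K (Subalgebra.toSubmodule T) then
    ⨅ (z : RatFunc K) (_ : z ≠ 0) (_ : ∀ a ∈ A, z * a ∈ polyExt D K (Subalgebra.toSubmodule T)),
      z⁻¹ • polyExt D K (o (contentOf D K (z • (A : Set (RatFunc K)))))
  else ⊤

/-- `▲^⋆ := ▲^⋆_K`, the largest strict extension of `⋆` to `D[X]`. -/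
def bigTri (o : Submodule D K → Submodule D K) :
    Submodule (Polynomial D) (RatFunc K) → Submodule (Polynomial D) (RatFunc K) :=
  bigTriT D K o ⊤

/-- `b` is an extension of `⋆` to `D[X]` : `E^⋆ = (E[X])^b ∩ K`. -/
def IsExtensionFun (o : Submodule D K → Submodule D K)
    (b : Submodule (Polynomial D) (RatFunc K) → Submodule (Polynomial D) (RatFunc K)) : Prop :=
  ∀ E : Submodule D K, E ≠ ⊥ → o E = contractToBase D K (b (polyExt D K E))

/-- `b` is a strict extension of `⋆` to `D[X]` : `(E[X])^b = E^⋆[X]`. -/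
def IsStrictExtensionFun (o : Submodule D K → Submodule D K)
    (b : Submodule (Polynomial D) (RatFunc K) → Submodule (Polynomial D) (RatFunc K)) : Prop :=
  ∀ E : Submodule D K, E ≠ ⊥ → b (polyExt D K E) = polyExt D K (o E)

/-- `⋏^⋆ : A ↦ ⋂ { A^★ : ★ a semistar operation of D[X] extending ⋆ }`. -/
def curlyFun (o : Submodule D K → Submodule D K) :
    Submodule (Polynomial D) (RatFunc K) → Submodule (Polynomial D) (RatFunc K) := fun A =>
  ⨅ (b : Submodule (Polynomial D) (RatFunc K) → Submodule (Polynomial D) (RatFunc K))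
    (_ : IsSemistarOp (Polynomial D) (RatFunc K) b) (_ : IsExtensionFun D K o b), b A

/-- The localization `D_Q` of `D` at a prime ideal `Q`, as a `D`-submodule of `K`. -/
def locSub (Q : Ideal D) : Submodule D K :=
  Submodule.span D { x : K | ∃ s : D, s ∉ Q ∧ s • x ∈ (1 : Submodule D K) }

/-- The content of an ideal `I` of `D[X]`: the `D`-submodule of `K` generated by the
coefficients of the polynomials in `I`. -/
def contentOfIdeal (I : Ideal (Polynomial D)) : Submodule D K :=
  Submodule.span D { x : K | ∃ p ∈ I, ∃ n, algebraMap D K (Polynomial.coeff p n) = x }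

/-- The Nagata ring `D_Q(X)`, as a subset of `K(X)`: fractions `f/g` with
`f, g ∈ D_Q[X]` and the coefficients of `g` generating the unit ideal of `D_Q`. -/
def nagataSet (Q : Ideal D) : Set (RatFunc K) :=
  { u : RatFunc K | ∃ g : Polynomial K, (∀ n, g.coeff n ∈ locSub D K Q) ∧
      locSub D K Q * Submodule.span D { x : K | ∃ n, g.coeff n = x } = locSub D K Q ∧
      u * algebraMap (Polynomial K) (RatFunc K) g ∈ polyExt D K (locSub D K Q) }

end Poly

/-! `A^▲` is the intersection of the modules `z⁻¹ c(zA)^⋆[X]` over the nonzero `z` with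
`zA ⊆ K[X]`, and `A ⊆ z⁻¹ c(zA)[X]` for each such `z`. Extensivity, monotonicity, homogeneity and
idempotence of `▲` follow termwise from those of `⋆`. For a strict extension `★`,
`A^★ ⊆ (z⁻¹ c(zA)[X])^★ = z⁻¹ c(zA)^⋆[X]`, whence `★ ≤ ▲`. Strictness: `z = 1` gives
`E[X]^▲ ⊆ E^⋆[X]`; conversely every admissible `z` for `E[X]` is a polynomial `p`, and
`p_i E^⋆ = (p_i E)^⋆ ⊆ c(pE[X])^⋆` for every coefficient `p_i`. -/

namespace Submodule

variable {R F : Type*} [CommSemiring R] [Field F] [Algebra R F] {x y : F} {M N : Submodule R F}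

lemma mem_inv_pointwise_smul_iff₀ (hx : x ≠ 0) : y ∈ x⁻¹ • M ↔ x * y ∈ M := by
  rw [← SetLike.mem_coe, coe_pointwise_smul, Set.mem_inv_smul_set_iff₀ hx]
  rfl

lemma pointwise_smul_mono (x : F) (h : M ≤ N) : x • M ≤ x • N := by
  intro y hy
  rw [← SetLike.mem_coe, coe_pointwise_smul] at hy ⊢
  exact Set.smul_set_mono h hy

lemma pointwise_smul_ne_bot (hx : x ≠ 0) (hM : M ≠ ⊥) : x • M ≠ ⊥ := by
  obtain ⟨m, hm, hm0⟩ := (Submodule.ne_bot_iff M).mp hM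
  exact (Submodule.ne_bot_iff _).mpr ⟨x • m, smul_mem_pointwise_smul m x M hm, smul_ne_zero hx hm0⟩

end Submodule

open Submodule

section Extension

variable {D K : Type*} [CommRing D] [Field K] [Algebra D K] {E G : Submodule D K}

local notation "ι" => algebraMap (Polynomial K) (RatFunc K)

-- `K[X]`, as a `D[X]`-submodule of `K(X)`
local notation "KX" => polyExt D K (Subalgebra.toSubmodule (⊤ : Subalgebra D K))

lemma mem_polyExt_top {f : RatFunc K} : f ∈ KX ↔ ∃ p : Polynomial K, f = ι p :=
  ⟨fun ⟨p, _, hf⟩ => ⟨p, hf⟩, fun ⟨p, hf⟩ => ⟨p, fun _ => trivial, hf⟩⟩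

lemma polyExt_mono (h : E ≤ G) : polyExt D K E ≤ polyExt D K G := by
  rintro f ⟨p, hp, rfl⟩
  exact ⟨p, fun n => h (hp n), rfl⟩

lemma algebraMap_C_mem_polyExt {x : K} (hx : x ∈ E) : ι (C x) ∈ polyExt D K E :=
  ⟨C x, fun n => by rw [coeff_C]; split_ifs; exacts [hx, E.zero_mem], rfl⟩

lemma polyExt_bot : polyExt D K (⊥ : Submodule D K) = ⊥ := by
  refine eq_bot_iff.mpr ?_
  rintro f ⟨p, hp, rfl⟩
  obtain rfl : p = 0 := Polynomial.ext fun n => by simpa using hp n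
  rw [map_zero]
  exact zero_mem _

lemma polyExt_ne_bot (hE : E ≠ ⊥) : polyExt D K E ≠ ⊥ := by
  obtain ⟨x, hxE, hx⟩ := (Submodule.ne_bot_iff E).mp hE
  refine (Submodule.ne_bot_iff _).mpr ⟨_, algebraMap_C_mem_polyExt hxE, ?_⟩
  rwa [map_ne_zero_iff _ (RatFunc.algebraMap_injective K), C_ne_zero]

lemma algebraMap_mul_mem_polyExt {p : Polynomial K} (h : ∀ i, p.coeff i • E ≤ G)
    {f : RatFunc K} (hf : f ∈ polyExt D K E) : ι p * f ∈ polyExt D K G := by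
  obtain ⟨q, hq, rfl⟩ := hf
  refine ⟨p * q, fun n => ?_, (map_mul _ _ _).symm⟩
  rw [coeff_mul]
  exact sum_mem fun ij _ => h ij.1 (smul_mem_pointwise_smul _ _ _ (hq ij.2))

lemma coeff_mem_contentOf {S : Set (RatFunc K)} {p : Polynomial K} (hp : ι p ∈ S) (n : ℕ) :
    p.coeff n ∈ contentOf D K S :=
  subset_span ⟨p, hp, n, rfl⟩

lemma contentOf_mono {S T : Set (RatFunc K)} (h : S ⊆ T) : contentOf D K S ≤ contentOf D K T :=
  span_mono fun _ ⟨p, hpS, hn⟩ => ⟨p, h hpS, hn⟩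

lemma contentOf_polyExt : contentOf D K (polyExt D K E : Set (RatFunc K)) = E := by
  refine le_antisymm ?_ fun x hx => ?_
  · rw [contentOf, span_le]
    rintro x ⟨p, ⟨q, hq, hpq⟩, n, rfl⟩
    obtain rfl := RatFunc.algebraMap_injective K hpq
    exact hq n
  · exact subset_span ⟨C x, algebraMap_C_mem_polyExt hx, 0, coeff_C_zero⟩

lemma coeff_smul_le_contentOf (p : Polynomial K) (i : ℕ) :
    p.coeff i • E ≤ contentOf D K (ι p • (polyExt D K E : Set (RatFunc K))) := by
  intro w hw
  obtain ⟨e, he, rfl⟩ := (mem_smul_pointwise_iff_exists _ _ _).mp hw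
  have hmem : ι (p * C e) ∈ ι p • (polyExt D K E : Set (RatFunc K)) :=
    Set.mem_smul_set.mpr ⟨_, algebraMap_C_mem_polyExt he, (map_mul _ _ _).symm⟩
  simpa only [coeff_mul_C, smul_eq_mul] using coeff_mem_contentOf hmem i

variable {A : Submodule (Polynomial D) (RatFunc K)} {z : RatFunc K}

lemma le_inv_smul_polyExt_contentOf (hz : z ≠ 0) (hzA : ∀ a ∈ A, z * a ∈ KX) :
    A ≤ z⁻¹ • polyExt D K (contentOf D K (z • (A : Set (RatFunc K)))) := by
  intro a ha
  rw [mem_inv_pointwise_smul_iff₀ hz]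
  obtain ⟨p, hp⟩ := mem_polyExt_top.mp (hzA a ha)
  rw [hp]
  exact ⟨p, coeff_mem_contentOf (hp ▸ Set.smul_mem_smul_set ha), rfl⟩

lemma contentOf_smul_le (hz : z ≠ 0) (h : A ≤ z⁻¹ • polyExt D K E) :
    contentOf D K (z • (A : Set (RatFunc K))) ≤ E := by
  refine (contentOf_mono ?_).trans contentOf_polyExt.le
  rintro _ ⟨a, ha, rfl⟩
  exact (mem_inv_pointwise_smul_iff₀ hz).mp (h ha)

lemma contentOf_smul_ne_bot (hA : A ≠ ⊥) (hz : z ≠ 0) (hzA : ∀ a ∈ A, z * a ∈ KX) :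
    contentOf D K (z • (A : Set (RatFunc K))) ≠ ⊥ := by
  intro hc
  apply hA
  have h := le_inv_smul_polyExt_contentOf hz hzA
  rwa [hc, polyExt_bot, smul_bot', le_bot_iff] at h

lemma exists_eq_algebraMap_of_forall_mul_mem (hE : E ≠ ⊥)
    (hzE : ∀ a ∈ polyExt D K E, z * a ∈ KX) : ∃ p : Polynomial K, z = ι p := by
  obtain ⟨e, heE, he⟩ := (Submodule.ne_bot_iff E).mp hE
  obtain ⟨q, hq⟩ := mem_polyExt_top.mp (hzE _ (algebraMap_C_mem_polyExt heE))
  refine ⟨q * C e⁻¹, ?_⟩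
  rw [map_mul, ← hq, mul_assoc, ← map_mul, ← C_mul, mul_inv_cancel₀ he, C_1, map_one, mul_one]

variable {star : Submodule D K → Submodule D K} {B : Submodule (Polynomial D) (RatFunc K)}

-- The `else` branch of `bigTriT` is the empty infimum.
lemma bigTri_eq_iInf : bigTri D K star A = ⨅ (z : RatFunc K) (_ : z ≠ 0) (_ : ∀ a ∈ A, z * a ∈ KX),
    z⁻¹ • polyExt D K (star (contentOf D K (z • (A : Set (RatFunc K))))) := by
  unfold bigTri bigTriT
  split_ifs with h
  · rfl
  · symm
    simp only [iInf_eq_top]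
    exact fun z hz hzA => absurd ⟨z, hz, hzA⟩ h

lemma le_bigTri_iff : B ≤ bigTri D K star A ↔ ∀ z : RatFunc K, z ≠ 0 → (∀ a ∈ A, z * a ∈ KX) →
    B ≤ z⁻¹ • polyExt D K (star (contentOf D K (z • (A : Set (RatFunc K))))) := by
  simp only [bigTri_eq_iInf, le_iInf_iff]

lemma bigTri_le (hz : z ≠ 0) (hzA : ∀ a ∈ A, z * a ∈ KX) :
    bigTri D K star A ≤ z⁻¹ • polyExt D K (star (contentOf D K (z • (A : Set (RatFunc K))))) :=
  le_bigTri_iff.mp le_rfl z hz hzA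

lemma le_bigTri_self (hstar : IsSemistarOp D K star) (hA : A ≠ ⊥) : A ≤ bigTri D K star A :=
  le_bigTri_iff.mpr fun _ hz hzA => (le_inv_smul_polyExt_contentOf hz hzA).trans
    (pointwise_smul_mono _ (polyExt_mono (hstar.2.2.1 _ (contentOf_smul_ne_bot hA hz hzA))))

lemma bigTri_ne_bot (hstar : IsSemistarOp D K star) (hA : A ≠ ⊥) : bigTri D K star A ≠ ⊥ :=
  ne_bot_of_le_ne_bot hA (le_bigTri_self hstar hA)

lemma bigTri_mono (hstar : IsSemistarOp D K star) (hA : A ≠ ⊥) (hAB : A ≤ B) :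
    bigTri D K star A ≤ bigTri D K star B := by
  refine le_bigTri_iff.mpr fun z hz hzB => ?_
  have hzA : ∀ a ∈ A, z * a ∈ KX := fun a ha => hzB a (hAB ha)
  refine (bigTri_le hz hzA).trans (pointwise_smul_mono _ (polyExt_mono ?_))
  exact hstar.2.1 _ _ (contentOf_smul_ne_bot hA hz hzA)
    (contentOf_smul_ne_bot (ne_bot_of_le_ne_bot hA hAB) hz hzB)
    (contentOf_mono (Set.smul_set_mono hAB))

lemma smul_bigTri_le {x : RatFunc K} (hx : x ≠ 0) :
    x • bigTri D K star A ≤ bigTri D K star (x • A) := by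
  refine le_bigTri_iff.mpr fun z hz hzxA => ?_
  have hzxA' : ∀ a ∈ A, z * x * a ∈ KX := fun a ha => by
    rw [mul_assoc]
    exact hzxA _ (smul_mem_pointwise_smul a x A ha)
  have h := pointwise_smul_mono x (bigTri_le (star := star) (mul_ne_zero hz hx) hzxA')
  rwa [smul_smul, mul_inv_rev, mul_inv_cancel_left₀ hx, mul_smul z x (A : Set (RatFunc K)),
    ← coe_pointwise_smul] at h

lemma bigTri_smul {x : RatFunc K} (hx : x ≠ 0) (A : Submodule (Polynomial D) (RatFunc K)) :
    bigTri D K star (x • A) = x • bigTri D K star A := by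
  refine le_antisymm ?_ (smul_bigTri_le hx)
  have h := pointwise_smul_mono x (smul_bigTri_le (star := star) (inv_ne_zero hx) (A := x • A))
  rwa [smul_smul, mul_inv_cancel₀ hx, one_smul, inv_smul_smul₀ hx] at h

lemma bigTri_bigTri (hstar : IsSemistarOp D K star) (hA : A ≠ ⊥) :
    bigTri D K star (bigTri D K star A) = bigTri D K star A := by
  refine le_antisymm (le_bigTri_iff.mpr fun z hz hzA => ?_)
    (le_bigTri_self hstar (bigTri_ne_bot hstar hA))
  set c := contentOf D K (z • (A : Set (RatFunc K)))
  have hc : c ≠ ⊥ := contentOf_smul_ne_bot hA hz hzA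
  have hA' : bigTri D K star A ≤ z⁻¹ • polyExt D K (star c) := bigTri_le hz hzA
  have hzA' : ∀ a ∈ bigTri D K star A, z * a ∈ KX := fun a ha =>
    polyExt_mono le_top ((mem_inv_pointwise_smul_iff₀ hz).mp (hA' ha))
  refine (bigTri_le hz hzA').trans (pointwise_smul_mono _ (polyExt_mono ?_))
  calc star (contentOf D K (z • (bigTri D K star A : Set (RatFunc K)))) ≤ star (star c) :=
        hstar.2.1 _ _ (contentOf_smul_ne_bot (bigTri_ne_bot hstar hA) hz hzA')
          (ne_bot_of_le_ne_bot hc (hstar.2.2.1 c hc)) (contentOf_smul_le hz hA')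
    _ = star c := hstar.2.2.2 c hc

lemma isSemistarOp_bigTri (hstar : IsSemistarOp D K star) :
    IsSemistarOp (Polynomial D) (RatFunc K) (bigTri D K star) :=
  ⟨fun _ hx A _ => bigTri_smul hx A, fun _ _ hA _ hAB => bigTri_mono hstar hA hAB,
    fun _ hA => le_bigTri_self hstar hA, fun _ hA => bigTri_bigTri hstar hA⟩

lemma bigTri_polyExt (hstar : IsSemistarOp D K star) (hE : E ≠ ⊥) :
    bigTri D K star (polyExt D K E) = polyExt D K (star E) := by
  refine le_antisymm ?_ (le_bigTri_iff.mpr fun z hz hzE => ?_)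
  · have h := bigTri_le (star := star) (A := polyExt D K E) one_ne_zero fun a ha => by
      rw [one_mul]
      exact polyExt_mono le_top ha
    rwa [inv_one, one_smul, one_smul, contentOf_polyExt] at h
  obtain ⟨p, rfl⟩ := exists_eq_algebraMap_of_forall_mul_mem hE hzE
  set c := contentOf D K (ι p • (polyExt D K E : Set _))
  have hc : c ≠ ⊥ := contentOf_smul_ne_bot (polyExt_ne_bot hE) hz hzE
  have hcoeff : ∀ i, p.coeff i • star E ≤ star c := by
    intro i
    by_cases hpi : p.coeff i = 0
    · intro w hw
      obtain ⟨y, -, rfl⟩ := (mem_smul_pointwise_iff_exists _ _ _).mp hw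
      rw [hpi, zero_smul]
      exact zero_mem _
    · rw [← hstar.1 _ hpi E hE]
      exact hstar.2.1 _ _ (pointwise_smul_ne_bot hpi hE) hc (coeff_smul_le_contentOf p i)
  intro f hf
  rw [mem_inv_pointwise_smul_iff₀ hz]
  exact algebraMap_mul_mem_polyExt hcoeff hf

lemma isStrictExtensionFun_bigTri (hstar : IsSemistarOp D K star) :
    IsStrictExtensionFun D K star (bigTri D K star) :=
  fun _ hE => bigTri_polyExt hstar hE

lemma le_bigTri_of_isStrictExtensionFun
    {b : Submodule (Polynomial D) (RatFunc K) → Submodule (Polynomial D) (RatFunc K)}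
    (hb : IsSemistarOp (Polynomial D) (RatFunc K) b) (hbs : IsStrictExtensionFun D K star b)
    (hA : A ≠ ⊥) : b A ≤ bigTri D K star A := by
  refine le_bigTri_iff.mpr fun z hz hzA => ?_
  have hc := polyExt_ne_bot (contentOf_smul_ne_bot hA hz hzA)
  calc b A ≤ b (z⁻¹ • polyExt D K (contentOf D K (z • (A : Set (RatFunc K))))) :=
        hb.2.1 _ _ hA (pointwise_smul_ne_bot (inv_ne_zero hz) hc)
          (le_inv_smul_polyExt_contentOf hz hzA)
    _ = z⁻¹ • b (polyExt D K (contentOf D K (z • (A : Set (RatFunc K))))) :=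
        hb.1 _ (inv_ne_zero hz) _ hc
    _ = _ := by rw [hbs _ (contentOf_smul_ne_bot hA hz hzA)]

end Extension

theorem bigTri_largest_strict_extension_general (D K : Type*) [CommRing D] [Field K] [Algebra D K]
    (star : Submodule D K → Submodule D K) (hstar : IsSemistarOp D K star) :
    IsSemistarOp (Polynomial D) (RatFunc K) (bigTri D K star) ∧
    IsStrictExtensionFun D K star (bigTri D K star) ∧
    ∀ b : Submodule (Polynomial D) (RatFunc K) → Submodule (Polynomial D) (RatFunc K),
      IsSemistarOp (Polynomial D) (RatFunc K) b → IsStrictExtensionFun D K star b →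
      ∀ A : Submodule (Polynomial D) (RatFunc K), A ≠ ⊥ → b A ≤ bigTri D K star A :=
  ⟨isSemistarOp_bigTri hstar, isStrictExtensionFun_bigTri hstar,
    fun _ hb hbs _ hA => le_bigTri_of_isStrictExtensionFun hb hbs hA⟩

theorem bigTri_largest_strict_extension (D K : Type*) [CommRing D] [IsDomain D] [Field K] [Algebra D K] [IsFractionRing D K]
    (star : Submodule D K → Submodule D K) (hstar : IsSemistarOp D K star) :
    IsSemistarOp (Polynomial D) (RatFunc K) (bigTri D K star) ∧
    IsStrictExtensionFun D K star (bigTri D K star) ∧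
    ∀ b : Submodule (Polynomial D) (RatFunc K) → Submodule (Polynomial D) (RatFunc K),
      IsSemistarOp (Polynomial D) (RatFunc K) b → IsStrictExtensionFun D K star b →
      ∀ A : Submodule (Polynomial D) (RatFunc K), A ≠ ⊥ → b A ≤ bigTri D K star A :=
  bigTri_largest_strict_extension_general D K star hstar
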